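/- arXiv:1010.5772 — 8 statements merged into one kernel-verified Lean document; each statement's English description precedes it below -/
import Mathlib

section
/- The Thue–Morse sequence is overlap-free: there do not exist indices k and a length n ≥ 1 such that t(k+i) = t(k+n+i) for all 0 ≤ i ≤ n (i.e., no factor of the form axaxa where a is a letter and x a word). -/
/-!
An overlap of even period `2m` at `k` halves to an overlap of period `m` at `k / 2`, because
`t (2x + b)` determines `t x`. For an odd period `n`, of the two positions `x` and `x + n` one is
even, and `t (2a) ≠ t (2a + 1)`; so the overlap makes `t` alternate along a window of length `2n`.
For `n = 1` this contradicts the overlap itself, and for `n ≥ 3` the window contains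
`t (2a + 1) ≠ t (2a + 2) ≠ t (2a + 3) ≠ t (2a + 4)`, which pulls back to `t a = t (a + 1) = t (a + 2)`,
impossible since one of `a`, `a + 1` is even.
-/

namespace ThueMorse

/-- `w` contains the overlap `axaxa`, with `|ax| = n`, starting at position `k`. -/
def HasOverlapAt {α : Type*} (w : ℕ → α) (k n : ℕ) : Prop :=
  ∀ i ≤ n, w (k + i) = w (k + n + i)

theorem one_sub_ne_self (x : Fin 2) : 1 - x ≠ x := by decide +revert

theorem one_sub_ne_iff (x y : Fin 2) : 1 - x ≠ y ↔ x = y := by decide +revert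

structure Recurrence (t : ℕ → Fin 2) : Prop where
  even : ∀ n, t (2 * n) = t n
  odd : ∀ n, t (2 * n + 1) = 1 - t n

namespace Recurrence

variable {t : ℕ → Fin 2}

theorem two_mul_add_eq_iff (ht : Recurrence t) {b : ℕ} (hb : b < 2) (x y : ℕ) :
    t (2 * x + b) = t (2 * y + b) ↔ t x = t y := by
  interval_cases b
  · simp only [add_zero, ht.even]
  · simp only [ht.odd, sub_right_inj]

theorem two_mul_ne_succ (ht : Recurrence t) (a : ℕ) : t (2 * a) ≠ t (2 * a + 1) := by
  rw [ht.even, ht.odd]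
  exact (one_sub_ne_self _).symm

theorem eq_succ_of_ne_at_odd (ht : Recurrence t) {a : ℕ} (h : t (2 * a + 1) ≠ t (2 * a + 2)) :
    t a = t (a + 1) := by
  rwa [ht.odd, show 2 * a + 2 = 2 * (a + 1) by ring, ht.even, one_sub_ne_iff] at h

theorem not_three_eq (ht : Recurrence t) (a : ℕ) : ¬ (t a = t (a + 1) ∧ t (a + 1) = t (a + 2)) := by
  rintro ⟨h₁, h₂⟩
  obtain ⟨j, rfl | rfl⟩ := Nat.even_or_odd' a
  · exact ht.two_mul_ne_succ j h₁
  · exact ht.two_mul_ne_succ (j + 1) h₂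

theorem not_alternating (ht : Recurrence t) (k : ℕ) :
    ¬ ∀ x, k ≤ x → x < k + 4 → t x ≠ t (x + 1) := by
  intro h
  have h₁ := ht.eq_succ_of_ne_at_odd (a := k / 2) (h _ (by omega) (by omega))
  have h₂ := ht.eq_succ_of_ne_at_odd (a := k / 2 + 1) (h _ (by omega) (by omega))
  exact ht.not_three_eq (k / 2) ⟨h₁, h₂⟩

theorem hasOverlapAt_half (ht : Recurrence t) {k m : ℕ} (h : HasOverlapAt t k (2 * m)) :
    HasOverlapAt t (k / 2) m := by
  intro i hi
  have hi' := h (2 * i) (by omega)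
  rwa [show k + 2 * i = 2 * (k / 2 + i) + k % 2 by omega,
    show k + 2 * m + 2 * i = 2 * (k / 2 + m + i) + k % 2 by omega,
    ht.two_mul_add_eq_iff (Nat.mod_lt k two_pos)] at hi'

theorem ne_succ_of_hasOverlapAt_odd (ht : Recurrence t) {k n : ℕ} (h : HasOverlapAt t k n)
    (hn : Odd n) {i : ℕ} (hi : i < n) : t (k + i) ≠ t (k + i + 1) := by
  rcases Nat.even_or_odd (k + i) with ⟨a, ha⟩ | ⟨a, ha⟩
  · rw [show k + i = 2 * a by omega]
    exact ht.two_mul_ne_succ a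
  · obtain ⟨b, rfl⟩ := hn
    rw [h i hi.le, show k + i + 1 = k + (i + 1) by ring, h (i + 1) hi,
      show k + (2 * b + 1) + i = 2 * (a + b + 1) by omega,
      show k + (2 * b + 1) + (i + 1) = 2 * (a + b + 1) + 1 by omega]
    exact ht.two_mul_ne_succ _

theorem not_hasOverlapAt_odd (ht : Recurrence t) {k n : ℕ} (hn : Odd n) :
    ¬ HasOverlapAt t k n := by
  intro h
  have alt := fun i (hi : i < n) ↦ ht.ne_succ_of_hasOverlapAt_odd h hn hi
  obtain rfl | hn3 : n = 1 ∨ 3 ≤ n := by obtain ⟨b, rfl⟩ := hn; omega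
  · exact alt 0 one_pos (h 0 zero_le_one)
  · refine ht.not_alternating k fun x hkx hx ↦ ?_
    obtain ⟨i, rfl⟩ := Nat.exists_eq_add_of_le hkx
    by_cases hin : i < n
    · exact alt i hin
    · obtain ⟨j, rfl⟩ := Nat.exists_eq_add_of_le (not_lt.mp hin)
      rw [← add_assoc, ← h j (by omega), add_assoc, ← h (j + 1) (by omega)]
      exact alt j (by omega)

theorem not_hasOverlapAt (ht : Recurrence t) (k : ℕ) {n : ℕ} (hn : 1 ≤ n) :
    ¬ HasOverlapAt t k n := by
  induction n using Nat.strong_induction_on generalizing k with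
  | _ n ih =>
    obtain ⟨m, rfl | rfl⟩ := Nat.even_or_odd' n
    · exact fun h ↦ ih m (by omega) (k / 2) (by omega) (ht.hasOverlapAt_half h)
    · exact ht.not_hasOverlapAt_odd (odd_two_mul_add_one m)

end Recurrence

end ThueMorse

theorem thue_morse_overlap_free_general (t : ℕ → Fin 2)
    (he : ∀ n, t (2 * n) = t n) (ho : ∀ n, t (2 * n + 1) = 1 - t n) :
    ¬ ∃ (k n : ℕ), 1 ≤ n ∧ ∀ i ≤ n, t (k + i) = t (k + n + i) := by
  rintro ⟨k, n, hn, h⟩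
  exact ThueMorse.Recurrence.not_hasOverlapAt ⟨he, ho⟩ k hn h

/-- The Thue–Morse sequence is overlap-free: no factor `axaxa`. -/
theorem thue_morse_overlap_free (t : ℕ → Fin 2)
    (h0 : t 0 = 0) (he : ∀ n, t (2 * n) = t n) (ho : ∀ n, t (2 * n + 1) = 1 - t n) :
    ¬ ∃ (k n : ℕ), 1 ≤ n ∧ ∀ i ≤ n, t (k + i) = t (k + n + i) :=
  thue_morse_overlap_free_general t he ho
end

section
/- The Thue–Morse sequence is cube-free: there is no index k and length n ≥ 1 such that the three consecutive blocks of length n starting at positions k, k+n, and k+2n are all identical. -/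
/-!
Write `t = μ(t)` with `μ : 0 ↦ 01, 1 ↦ 10`, so the even-aligned pairs `t(2a) t(2a+1)` are
always `01` or `10`. A cube of even period `2m` can be shifted to start at an even position and
then desubstituted into a cube of period `m`. A cube of odd period `p ≥ 3` would map two
consecutive even-aligned pairs (each with distinct letters) onto two consecutive odd-aligned
pairs with distinct letters, and `t(2b+1) ≠ t(2b+2)` means `t b = t (b+1)`, so this produces three
equal consecutive letters, which the pair structure forbids; so does a cube of period `1`.
-/

namespace ThueMorse

def HasCubeAt (t : ℕ → Fin 2) (k p : ℕ) : Prop :=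
  ∀ i < 2 * p, t (k + i) = t (k + i + p)

variable {t : ℕ → Fin 2}

lemma two_mul_ne_two_mul_add_one (he : ∀ n, t (2 * n) = t n)
    (ho : ∀ n, t (2 * n + 1) = 1 - t n) (a : ℕ) : t (2 * a) ≠ t (2 * a + 1) := by
  rw [he, ho]
  generalize t a = x
  revert x
  decide

lemma not_three_consecutive_eq (he : ∀ n, t (2 * n) = t n)
    (ho : ∀ n, t (2 * n + 1) = 1 - t n) (b : ℕ) :
    ¬ (t b = t (b + 1) ∧ t (b + 1) = t (b + 2)) := by
  rintro ⟨h₁, h₂⟩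
  rcases Nat.even_or_odd' b with ⟨c, rfl | rfl⟩
  · exact two_mul_ne_two_mul_add_one he ho c h₁
  · exact two_mul_ne_two_mul_add_one he ho (c + 1) (by convert h₂ using 2 <;> omega)

lemma two_mul_add_one_ne_iff (he : ∀ n, t (2 * n) = t n)
    (ho : ∀ n, t (2 * n + 1) = 1 - t n) (b : ℕ) :
    t (2 * b + 1) ≠ t (2 * b + 2) ↔ t b = t (b + 1) := by
  rw [ho, show 2 * b + 2 = 2 * (b + 1) by ring, he]
  generalize t b = x
  generalize t (b + 1) = y
  revert x y
  decide

lemma HasCubeAt.half (he : ∀ n, t (2 * n) = t n) {k m : ℕ} (hc : HasCubeAt t k (2 * m)) :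
    HasCubeAt t ((k + 1) / 2) m := by
  intro j hj
  rw [← he ((k + 1) / 2 + j), ← he ((k + 1) / 2 + j + m)]
  convert hc (k % 2 + 2 * j) (by omega) using 2 <;> omega

lemma not_hasCubeAt_one (he : ∀ n, t (2 * n) = t n)
    (ho : ∀ n, t (2 * n + 1) = 1 - t n) (k : ℕ) : ¬ HasCubeAt t k 1 := fun hc ↦
  not_three_consecutive_eq he ho k ⟨hc 0 (by omega), by convert hc 1 (by omega) using 2⟩

lemma not_hasCubeAt_of_odd (he : ∀ n, t (2 * n) = t n)
    (ho : ∀ n, t (2 * n + 1) = 1 - t n) {k p : ℕ} (hp : Odd p) (hp3 : 3 ≤ p) :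
    ¬ HasCubeAt t k p := by
  intro hc
  obtain ⟨m, rfl⟩ := hp
  set c := (k + 1) / 2
  -- the even-aligned pairs at `2c` and `2c + 2` are shifted onto odd-aligned pairs
  have shifted : ∀ i ≤ 1, t (2 * (c + i + m) + 1) ≠ t (2 * (c + i + m) + 2) := by
    intro i hi hne
    refine two_mul_ne_two_mul_add_one he ho (c + i) ?_
    have h₁ : t (2 * (c + i)) = t (2 * (c + i + m) + 1) := by
      convert hc (k % 2 + 2 * i) (by omega) using 2 <;> omega
    have h₂ : t (2 * (c + i) + 1) = t (2 * (c + i + m) + 2) := by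
      convert hc (k % 2 + 2 * i + 1) (by omega) using 2 <;> omega
    exact h₁.trans (hne.trans h₂.symm)
  have h₁ := (two_mul_add_one_ne_iff he ho _).1 (shifted 0 zero_le_one)
  have h₂ := (two_mul_add_one_ne_iff he ho _).1 (shifted 1 le_rfl)
  refine not_three_consecutive_eq he ho (c + m) ⟨h₁, ?_⟩
  convert h₂ using 2 <;> omega

theorem not_hasCubeAt (he : ∀ n, t (2 * n) = t n)
    (ho : ∀ n, t (2 * n + 1) = 1 - t n) {p : ℕ} (hp : 1 ≤ p) (k : ℕ) :
    ¬ HasCubeAt t k p := by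
  induction p using Nat.strong_induction_on generalizing k with
  | _ p ih =>
    rcases Nat.even_or_odd' p with ⟨m, rfl | rfl⟩
    · exact fun hc ↦ ih m (by omega) (by omega) _ (hc.half he)
    · rcases Nat.eq_zero_or_pos m with rfl | hm
      · exact not_hasCubeAt_one he ho k
      · exact not_hasCubeAt_of_odd he ho (odd_two_mul_add_one m) (by omega)

end ThueMorse

theorem thue_morse_cube_free_general (t : ℕ → Fin 2)
    (he : ∀ n, t (2 * n) = t n) (ho : ∀ n, t (2 * n + 1) = 1 - t n) :
    ¬ ∃ (k n : ℕ), 1 ≤ n ∧ ∀ i < n,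
      t (k + i) = t (k + n + i) ∧ t (k + n + i) = t (k + 2 * n + i) := by
  rintro ⟨k, n, hn, h⟩
  refine ThueMorse.not_hasCubeAt he ho hn k fun i hi ↦ ?_
  rcases Nat.lt_or_ge i n with hlt | hge
  · convert (h i hlt).1 using 2; omega
  · convert (h (i - n) (by omega)).2 using 2 <;> omega

/-- The Thue–Morse sequence is cube-free. -/
theorem thue_morse_cube_free (t : ℕ → Fin 2)
    (h0 : t 0 = 0) (he : ∀ n, t (2 * n) = t n) (ho : ∀ n, t (2 * n + 1) = 1 - t n) :
    ¬ ∃ (k n : ℕ), 1 ≤ n ∧ ∀ i < n,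
      t (k + i) = t (k + n + i) ∧ t (k + n + i) = t (k + 2 * n + i) :=
  thue_morse_cube_free_general t he ho
end

section
/- If a sequence s : ℕ → Fin 2 is overlap-free, then the ternary sequence whose n-th term is the number of 1's between the n-th and (n+1)-st occurrences of 0 in s is square-free (contains no two adjacent identical blocks of any positive length). -/
/-!
A square of length `n` at position `k` in the derived sequence means that the zeros
`z k, …, z (k + n)` of `s` and the zeros `z (k + n), …, z (k + 2n)` have the same gaps, so the
second run of zeros is the first one translated by `N = z (k + n) - z k`. Since `z` lists all
zeros of `s`, the factor of `s` on `[z k, z k + 2N]` is then determined by its zeros and has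
period `N`, which is an overlap.
-/

theorem StrictMono.add_eq_add_of_gaps_eq {z : ℕ → ℕ} (hz : StrictMono z) {a b n : ℕ}
    (hgap : ∀ i < n, z (a + i + 1) - z (a + i) - 1 = z (b + i + 1) - z (b + i) - 1) :
    ∀ i ≤ n, z (b + i) + z a = z b + z (a + i) := by
  intro i hi
  induction i with
  | zero => simp [add_comm]
  | succ j ih =>
    rw [← add_assoc, ← add_assoc]
    have hj := hgap j hi
    have ha : z (a + j) < z (a + j + 1) := hz (by omega)
    have hb : z (b + j) < z (b + j + 1) := hz (by omega)
    have := ih (by omega)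
    omega

section Enumeration

variable {α : Type*} {s : ℕ → α} {c : α} {z : ℕ → ℕ}

theorem apply_add_eq_of_translate (hz : StrictMono z) (hzc : ∀ n, s (z n) = c)
    (hall : ∀ m, s m = c → ∃ n, z n = m) {a b n : ℕ}
    (htr : ∀ i ≤ n, z (b + i) + z a = z b + z (a + i)) {p : ℕ} (hp : z a + p ≤ z (a + n))
    (h : s (z a + p) = c) : s (z b + p) = c := by
  obtain ⟨j, hj⟩ := hall _ h
  have haj : a ≤ j := hz.le_iff_le.mp (by omega)
  have hjn : j ≤ a + n := hz.le_iff_le.mp (by omega)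
  obtain ⟨i, rfl⟩ := Nat.exists_eq_add_of_le haj
  have := htr i (by omega)
  rw [show z b + p = z (b + i) by omega]
  exact hzc _

end Enumeration

theorem Fin.two_eq_of_eq_zero_iff {x y : Fin 2} (h : x = 0 ↔ y = 0) : x = y := by
  fin_cases x <;> fin_cases y <;> simp_all

/-- If `s` is overlap-free (with infinitely many zeros, enumerated by `z`), then the
derived sequence counting the 1's between consecutive 0's is square-free. -/
theorem derived_sequence_square_free (s : ℕ → Fin 2) (z : ℕ → ℕ)
    (hmono : StrictMono z)
    (hz0 : ∀ n, s (z n) = 0)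
    (hall : ∀ m, s m = 0 → ∃ n, z n = m)
    (hoverlap : ¬ ∃ (k n : ℕ), 1 ≤ n ∧ ∀ i ≤ n, s (k + i) = s (k + n + i)) :
    ¬ ∃ (k n : ℕ), 1 ≤ n ∧ ∀ i < n,
      z (k + i + 1) - z (k + i) - 1 = z (k + n + i + 1) - z (k + n + i) - 1 := by
  rintro ⟨k, n, hn, hsq⟩
  have htr := hmono.add_eq_add_of_gaps_eq hsq
  have htr' : ∀ i ≤ n, z (k + i) + z (k + n) = z k + z (k + n + i) := fun i hi => by
    have := htr i hi
    omega
  have hlt : z k < z (k + n) := hmono (by omega)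
  have hend := htr n le_rfl
  refine hoverlap ⟨z k, z (k + n) - z k, by omega, fun i hi => ?_⟩
  rw [show z k + (z (k + n) - z k) = z (k + n) by omega]
  exact Fin.two_eq_of_eq_zero_iff
    ⟨apply_add_eq_of_translate hmono hz0 hall htr (by omega),
      apply_add_eq_of_translate hmono hz0 hall htr' (by omega)⟩
end

section
/- Lefthanded Local Lemma: Let 𝒜 be a finite family of events in a probability space, viewed as vertices of a directed graph G with out-neighborhoods Γ(A), and equipped with a quasi-order ≤ such that for all A ∈ 𝒜, all B ∈ Γ(A), and all C ∉ Γ(A) ∪ {A}, either ¬(C > B) or C > A. Suppose there are reals 0 < x_A < 1 such that for every A ∈ 𝒜 and every family 𝒞 ⊆ 𝒜 \ Γ(A) with ¬(C > A) for all C ∈ 𝒞 (and P(⋂_{C∈𝒞} Cᶜ) > 0), we have P(A | ⋂_{C∈𝒞} Cᶜ) ≤ x_A · ∏_{B ∈ Γ(A)} (1 − x_B). Then for any disjoint families 𝒜₁, 𝒜₂ ⊆ 𝒜 with ¬(A₂ > A₁) for all A₁ ∈ 𝒜₁, A₂ ∈ 𝒜₂, we have P(⋂_{A₁∈𝒜₁}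 A₁ᶜ | ⋂_{A₂∈𝒜₂} A₂ᶜ) ≥ ∏_{A₁∈𝒜₁} (1 − x_{A₁}); in particular P(⋂_{A∈𝒜} Aᶜ) > 0. -/
open MeasureTheory
open scoped ENNReal

/-!
The division-free form `∏_{A ∈ 𝒜₁} (1 - x_A) · μ(⋂_{𝒜₂} Aᶜ) ≤ μ(⋂_{𝒜₁} Aᶜ ∩ ⋂_{𝒜₂} Aᶜ)` holds
by induction on `|𝒜₁| + |𝒜₂|`. Remove from `𝒜₁` an event `A` with nothing in `𝒜₁ ∪ 𝒜₂` strictly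
above it and let `𝒞` be what remains; it suffices that `μ(A ∩ ⋂_𝒞 Cᶜ) ≤ x_A μ(⋂_𝒞 Cᶜ)`.
Split `𝒞` into the neighbours `𝒞 ∩ Γ(A)` and the rest. The hypothesis bounds `A` against the
non-neighbours, and the lefthanded condition says that no non-neighbour lies strictly above a
neighbour, so the induction hypothesis applies to the split and pays for the factor
`∏_{Γ(A)} (1 - x_B)`. In `ℝ≥0∞` no positivity bookkeeping is needed: when a conditioning event
is null, the bounds hold trivially.
-/

theorem Finset.exists_forall_not_strictly_above {ι : Type*} (le : ι → ι → Prop)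
    (htrans : ∀ a b c, le a b → le b c → le a c) (s : Finset ι) (hs : s.Nonempty) :
    ∃ A ∈ s, ∀ C ∈ s, ¬ (le A C ∧ ¬ le C A) := by
  let below : ι → ι → Prop := fun a b => le b a ∧ ¬ le a b
  have : IsStrictOrder ι below :=
    { irrefl := fun _ h => h.2 h.1
      trans := fun _ _ _ hab hbc =>
        ⟨htrans _ _ _ hbc.1 hab.1, fun hac => hab.2 (htrans _ _ _ hac hbc.1)⟩ }
  have hwf : (s : Set ι).WellFoundedOn below := s.finite_toSet.wellFoundedOn
  obtain ⟨⟨A, hA⟩, -, hmin⟩ := hwf.has_min Set.univ ⟨⟨_, hs.choose_spec⟩, trivial⟩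
  exact ⟨A, hA, fun C hC => hmin ⟨C, hC⟩ trivial⟩

theorem not_strictly_above_of_lefthanded {ι : Type*} [DecidableEq ι] {𝒜 𝒞 : Finset ι}
    {Γ : ι → Finset ι} {le : ι → ι → Prop}
    (hG : ∀ A ∈ 𝒜, ∀ B ∈ Γ A, ∀ C ∈ 𝒜, C ∉ Γ A → C ≠ A →
      ¬ (le B C ∧ ¬ le C B) ∨ (le A C ∧ ¬ le C A))
    {A : ι} (hA : A ∈ 𝒜) (h𝒞 : 𝒞 ⊆ 𝒜) (hA𝒞 : A ∉ 𝒞)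
    (hmax : ∀ C ∈ 𝒞, ¬ (le A C ∧ ¬ le C A)) :
    ∀ C₁ ∈ 𝒞 ∩ Γ A, ∀ C₂ ∈ 𝒞 \ Γ A, ¬ (le C₁ C₂ ∧ ¬ le C₂ C₁) := by
  intro C₁ hC₁ C₂ hC₂
  obtain ⟨-, hC₁Γ⟩ := Finset.mem_inter.1 hC₁
  obtain ⟨hC₂𝒞, hC₂Γ⟩ := Finset.mem_sdiff.1 hC₂
  exact (hG A hA C₁ hC₁Γ C₂ (h𝒞 hC₂𝒞) hC₂Γ (ne_of_mem_of_not_mem hC₂𝒞 hA𝒞)).resolve_right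
    (hmax C₂ hC₂𝒞)

theorem Finset.biInter_compl_inter_eq_erase_sdiff {ι α : Type*} [DecidableEq ι] (E : ι → Set α)
    {s t : Finset ι} {a : ι} (ha : a ∈ s) :
    (⋂ i ∈ s, (E i)ᶜ) ∩ ⋂ i ∈ t, (E i)ᶜ = (⋂ i ∈ s.erase a ∪ t, (E i)ᶜ) \ E a := by
  rw [← insert_erase ha, set_biInter_insert, erase_insert (notMem_erase a s), set_biInter_inter,
    Set.sdiff_eq, Set.inter_assoc, Set.inter_comm]

section Measure

variable {Ω : Type*} [MeasurableSpace Ω] {μ : Measure Ω} [IsFiniteMeasure μ]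

theorem measure_inter_le_mul_of_div_le {F T : Set Ω} {c : ℝ≥0∞}
    (h : 0 < μ T → μ (F ∩ T) / μ T ≤ c) : μ (F ∩ T) ≤ c * μ T := by
  rcases eq_zero_or_pos (μ T) with hT | hT
  · rw [hT, mul_zero]
    exact (measure_mono Set.inter_subset_right).trans hT.le
  · exact (ENNReal.div_le_iff hT.ne' (measure_ne_top μ T)).1 (h hT)

theorem one_sub_mul_le_measure_diff {F M : Set Ω} {a : ℝ≥0∞} (h : μ (F ∩ M) ≤ a * μ M) :
    (1 - a) * μ M ≤ μ (M \ F) := by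
  rcases le_or_gt 1 a with ha | ha
  · simp [tsub_eq_zero_of_le ha]
  · rw [← ENNReal.add_le_add_iff_right (ENNReal.mul_ne_top ha.ne_top (measure_ne_top μ M)),
      ← add_mul, tsub_add_cancel_of_le ha.le, one_mul]
    calc μ M ≤ μ (M ∩ F) + μ (M \ F) := measure_le_inter_add_sdiff μ M F
      _ ≤ μ (M \ F) + a * μ M := by rw [Set.inter_comm, add_comm]; gcongr

theorem measure_inter_biInter_compl_le {ι : Type*} [DecidableEq ι] (E : ι → Set Ω)
    (x : ι → ℝ≥0∞) (A : ι) (𝒞 N : Finset ι)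
    (hcond : 0 < μ (⋂ C ∈ 𝒞 \ N, (E C)ᶜ) →
      μ (E A ∩ ⋂ C ∈ 𝒞 \ N, (E C)ᶜ) / μ (⋂ C ∈ 𝒞 \ N, (E C)ᶜ) ≤ x A * ∏ B ∈ N, (1 - x B))
    (hneighbours : (∏ B ∈ 𝒞 ∩ N, (1 - x B)) * μ (⋂ C ∈ 𝒞 \ N, (E C)ᶜ)
      ≤ μ ((⋂ C ∈ 𝒞 ∩ N, (E C)ᶜ) ∩ ⋂ C ∈ 𝒞 \ N, (E C)ᶜ)) :
    μ (E A ∩ ⋂ C ∈ 𝒞, (E C)ᶜ) ≤ x A * μ (⋂ C ∈ 𝒞, (E C)ᶜ) := by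
  have hsplit : ⋂ C ∈ 𝒞, (E C)ᶜ = (⋂ C ∈ 𝒞 ∩ N, (E C)ᶜ) ∩ ⋂ C ∈ 𝒞 \ N, (E C)ᶜ := by
    rw [Set.inter_comm, ← Finset.set_biInter_inter, Finset.sdiff_union_inter]
  calc μ (E A ∩ ⋂ C ∈ 𝒞, (E C)ᶜ)
      ≤ μ (E A ∩ ⋂ C ∈ 𝒞 \ N, (E C)ᶜ) := by
        rw [hsplit]; exact measure_mono (Set.inter_subset_inter_right _ Set.inter_subset_right)
    _ ≤ x A * ((∏ B ∈ N, (1 - x B)) * μ (⋂ C ∈ 𝒞 \ N, (E C)ᶜ)) := by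
        rw [← mul_assoc]; exact measure_inter_le_mul_of_div_le hcond
    _ ≤ x A * ((∏ B ∈ 𝒞 ∩ N, (1 - x B)) * μ (⋂ C ∈ 𝒞 \ N, (E C)ᶜ)) := by
        have hprod : ∏ B ∈ N, (1 - x B) ≤ ∏ B ∈ 𝒞 ∩ N, (1 - x B) :=
          Finset.prod_le_prod_of_subset_of_le_one' Finset.inter_subset_right
            fun _ _ _ => tsub_le_self
        gcongr
    _ ≤ x A * μ (⋂ C ∈ 𝒞, (E C)ᶜ) := by rw [hsplit]; gcongr

end Measure

open Finset in
theorem prod_one_sub_mul_measure_le_of_lefthanded {Ω ι : Type*} [MeasurableSpace Ω]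
    [DecidableEq ι] (μ : Measure Ω) [IsFiniteMeasure μ]
    (𝒜 : Finset ι) (E : ι → Set Ω) (Γ : ι → Finset ι)
    (le : ι → ι → Prop) (htrans : ∀ a b c, le a b → le b c → le a c)
    (hG : ∀ A ∈ 𝒜, ∀ B ∈ Γ A, ∀ C ∈ 𝒜, C ∉ Γ A → C ≠ A →
      ¬ (le B C ∧ ¬ le C B) ∨ (le A C ∧ ¬ le C A))
    (x : ι → ℝ≥0∞)
    (hmain : ∀ A ∈ 𝒜, ∀ 𝒞 ⊆ 𝒜 \ Γ A, (∀ C ∈ 𝒞, ¬ (le A C ∧ ¬ le C A)) →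
      0 < μ (⋂ C ∈ 𝒞, (E C)ᶜ) →
      μ (E A ∩ ⋂ C ∈ 𝒞, (E C)ᶜ) / μ (⋂ C ∈ 𝒞, (E C)ᶜ)
        ≤ x A * ∏ B ∈ Γ A, (1 - x B))
    (𝒜₁ 𝒜₂ : Finset ι) (h₁ : 𝒜₁ ⊆ 𝒜) (h₂ : 𝒜₂ ⊆ 𝒜) (hdisj : Disjoint 𝒜₁ 𝒜₂)
    (hord : ∀ A₁ ∈ 𝒜₁, ∀ A₂ ∈ 𝒜₂, ¬ (le A₁ A₂ ∧ ¬ le A₂ A₁)) :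
    (∏ A ∈ 𝒜₁, (1 - x A)) * μ (⋂ A ∈ 𝒜₂, (E A)ᶜ)
      ≤ μ ((⋂ A ∈ 𝒜₁, (E A)ᶜ) ∩ ⋂ A ∈ 𝒜₂, (E A)ᶜ) := by
  obtain ⟨n, hn⟩ : ∃ n, #𝒜₁ + #𝒜₂ = n := ⟨_, rfl⟩
  induction n generalizing 𝒜₁ 𝒜₂ with
  | zero =>
    obtain rfl : 𝒜₁ = ∅ := card_eq_zero.1 (by omega)
    simp
  | succ n ih =>
    rcases 𝒜₁.eq_empty_or_nonempty with rfl | hne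
    · simp
    obtain ⟨A, hA, hAmax⟩ := 𝒜₁.exists_forall_not_strictly_above le htrans hne
    set 𝒞 := 𝒜₁.erase A ∪ 𝒜₂
    have hdisj' : Disjoint (𝒜₁.erase A) 𝒜₂ := disjoint_of_subset_left (erase_subset A 𝒜₁) hdisj
    have hcard : #𝒞 = n := by
      rw [card_union_of_disjoint hdisj', card_erase_of_mem hA]
      have := card_pos.2 hne
      omega
    have hA𝒞 : A ∉ 𝒞 := by
      simp only [𝒞, mem_union, not_or]
      exact ⟨notMem_erase A 𝒜₁, disjoint_left.1 hdisj hA⟩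
    have h𝒞𝒜 : 𝒞 ⊆ 𝒜 := union_subset ((erase_subset A 𝒜₁).trans h₁) h₂
    have hA𝒞max : ∀ C ∈ 𝒞, ¬ (le A C ∧ ¬ le C A) := by
      intro C hC
      rcases mem_union.1 hC with hC | hC
      exacts [hAmax C (mem_of_mem_erase hC), hord A hA C hC]
    have hsingle : μ (E A ∩ ⋂ C ∈ 𝒞, (E C)ᶜ) ≤ x A * μ (⋂ C ∈ 𝒞, (E C)ᶜ) :=
      measure_inter_biInter_compl_le E x A 𝒞 (Γ A)
        (hmain A (h₁ hA) _ (sdiff_subset_sdiff h𝒞𝒜 subset_rfl)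
          fun C hC => hA𝒞max C (mem_sdiff.1 hC).1)
        (ih _ _ (inter_subset_left.trans h𝒞𝒜) (sdiff_subset.trans h𝒞𝒜)
          (disjoint_sdiff_inter 𝒞 (Γ A)).symm
          (not_strictly_above_of_lefthanded hG (h₁ hA) h𝒞𝒜 hA𝒞 hA𝒞max)
          (by rw [card_inter_add_card_sdiff, hcard]))
    have hrest := ih (𝒜₁.erase A) 𝒜₂ ((erase_subset A 𝒜₁).trans h₁) h₂ hdisj'
      (fun C₁ hC₁ => hord C₁ (mem_of_mem_erase hC₁))
      (by rw [← card_union_of_disjoint hdisj', hcard])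
    calc (∏ A ∈ 𝒜₁, (1 - x A)) * μ (⋂ A ∈ 𝒜₂, (E A)ᶜ)
        = (1 - x A) * ((∏ A ∈ 𝒜₁.erase A, (1 - x A)) * μ (⋂ A ∈ 𝒜₂, (E A)ᶜ)) := by
          rw [← mul_prod_erase 𝒜₁ _ hA, mul_assoc]
      _ ≤ (1 - x A) * μ (⋂ C ∈ 𝒞, (E C)ᶜ) := by rw [set_biInter_inter]; gcongr
      _ ≤ μ ((⋂ C ∈ 𝒞, (E C)ᶜ) \ E A) := one_sub_mul_le_measure_diff hsingle
      _ = _ := by rw [biInter_compl_inter_eq_erase_sdiff E hA]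

theorem lefthanded_local_lemma_general {Ω ι : Type*} [MeasurableSpace Ω] [DecidableEq ι]
    (μ : Measure Ω) [IsProbabilityMeasure μ]
    (𝒜 : Finset ι) (E : ι → Set Ω) (Γ : ι → Finset ι)
    (le : ι → ι → Prop)
    (htrans : ∀ a b c, le a b → le b c → le a c)
    (hG : ∀ A ∈ 𝒜, ∀ B ∈ Γ A, ∀ C ∈ 𝒜, C ∉ Γ A → C ≠ A →
      ¬ (le B C ∧ ¬ le C B) ∨ (le A C ∧ ¬ le C A))
    (x : ι → ℝ≥0∞) (hx1 : ∀ A ∈ 𝒜, x A < 1)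
    (hmain : ∀ A ∈ 𝒜, ∀ 𝒞 ⊆ 𝒜 \ Γ A, (∀ C ∈ 𝒞, ¬ (le A C ∧ ¬ le C A)) →
      0 < μ (⋂ C ∈ 𝒞, (E C)ᶜ) →
      μ (E A ∩ ⋂ C ∈ 𝒞, (E C)ᶜ) / μ (⋂ C ∈ 𝒞, (E C)ᶜ)
        ≤ x A * ∏ B ∈ Γ A, (1 - x B)) :
    (∀ 𝒜₁ 𝒜₂ : Finset ι, 𝒜₁ ⊆ 𝒜 → 𝒜₂ ⊆ 𝒜 → Disjoint 𝒜₁ 𝒜₂ →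
      (∀ A₁ ∈ 𝒜₁, ∀ A₂ ∈ 𝒜₂, ¬ (le A₁ A₂ ∧ ¬ le A₂ A₁)) →
      μ ((⋂ A₁ ∈ 𝒜₁, (E A₁)ᶜ) ∩ ⋂ A₂ ∈ 𝒜₂, (E A₂)ᶜ) / μ (⋂ A₂ ∈ 𝒜₂, (E A₂)ᶜ)
        ≥ ∏ A₁ ∈ 𝒜₁, (1 - x A₁))
    ∧ 0 < μ (⋂ A ∈ 𝒜, (E A)ᶜ) := by
  have key := prod_one_sub_mul_measure_le_of_lefthanded μ 𝒜 E Γ le htrans hG x hmain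
  have hpos : ∀ 𝒮 ⊆ 𝒜, 0 < μ (⋂ A ∈ 𝒮, (E A)ᶜ) := fun 𝒮 h𝒮 => by
    have h := key 𝒮 ∅ h𝒮 (Finset.empty_subset 𝒜) (Finset.disjoint_empty_right 𝒮) (by simp)
    simp only [Finset.notMem_empty, Set.iInter_of_empty, Set.iInter_univ, measure_univ,
      mul_one, Set.inter_univ] at h
    refine lt_of_lt_of_le (CanonicallyOrderedAdd.prod_pos.2 fun A hA => ?_) h
    exact tsub_pos_of_lt (hx1 A (h𝒮 hA))
  refine ⟨fun 𝒜₁ 𝒜₂ h₁ h₂ hdisj hord => ?_, hpos 𝒜 subset_rfl⟩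
  rw [ge_iff_le,
    ENNReal.le_div_iff_mul_le (Or.inl (hpos 𝒜₂ h₂).ne') (Or.inl (measure_ne_top μ _))]
  exact key 𝒜₁ 𝒜₂ h₁ h₂ hdisj hord

/-- The Lefthanded Local Lemma.  Events `E A` for `A` in a finite family `𝒜`, a
dependency digraph with out-neighborhoods `Γ A`, and a quasi-order `le` satisfying
the lefthanded compatibility condition.  Here `P(X|Y)` is `μ (X ∩ Y) / μ Y` and
`C > A` means `le A C ∧ ¬ le C A`. -/
theorem lefthanded_local_lemma {Ω ι : Type*} [MeasurableSpace Ω] [DecidableEq ι]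
    (μ : Measure Ω) [IsProbabilityMeasure μ]
    (𝒜 : Finset ι) (E : ι → Set Ω) (Γ : ι → Finset ι)
    (le : ι → ι → Prop) (hrefl : ∀ a, le a a)
    (htrans : ∀ a b c, le a b → le b c → le a c)
    (hG : ∀ A ∈ 𝒜, ∀ B ∈ Γ A, ∀ C ∈ 𝒜, C ∉ Γ A → C ≠ A →
      ¬ (le B C ∧ ¬ le C B) ∨ (le A C ∧ ¬ le C A))
    (x : ι → ℝ≥0∞) (hx0 : ∀ A ∈ 𝒜, 0 < x A) (hx1 : ∀ A ∈ 𝒜, x A < 1)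
    (hmain : ∀ A ∈ 𝒜, ∀ 𝒞 ⊆ 𝒜 \ Γ A, (∀ C ∈ 𝒞, ¬ (le A C ∧ ¬ le C A)) →
      0 < μ (⋂ C ∈ 𝒞, (E C)ᶜ) →
      μ (E A ∩ ⋂ C ∈ 𝒞, (E C)ᶜ) / μ (⋂ C ∈ 𝒞, (E C)ᶜ)
        ≤ x A * ∏ B ∈ Γ A, (1 - x B)) :
    (∀ 𝒜₁ 𝒜₂ : Finset ι, 𝒜₁ ⊆ 𝒜 → 𝒜₂ ⊆ 𝒜 → Disjoint 𝒜₁ 𝒜₂ →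
      (∀ A₁ ∈ 𝒜₁, ∀ A₂ ∈ 𝒜₂, ¬ (le A₁ A₂ ∧ ¬ le A₂ A₁)) →
      μ ((⋂ A₁ ∈ 𝒜₁, (E A₁)ᶜ) ∩ ⋂ A₂ ∈ 𝒜₂, (E A₂)ᶜ) / μ (⋂ A₂ ∈ 𝒜₂, (E A₂)ᶜ)
        ≥ ∏ A₁ ∈ 𝒜₁, (1 - x A₁))
    ∧ 0 < μ (⋂ A ∈ 𝒜, (E A)ᶜ) :=
  lefthanded_local_lemma_general μ 𝒜 E Γ le htrans hG x hx1 hmain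
end

section
/- If an interval I of length kr (r ≥ 2) contains a prismatic pair of k-term arithmetic progressions of common difference r with respect to a coloring χ, then no two of the k consecutive subintervals of length r that partition I carry identical color blocks. -/
/-!
Two identical blocks `m < m'` would give `χ (x + m * r) = χ (x + m' * r)` for every `x` in the
first block `[ℓ + 1, ℓ + r]`, which contains both starting points `a` and `a + 1`. One of
`a + m' * r` and `a + 1 + m' * r` is odd, so one of the two progressions forbids this equality.
-/

theorem apply_add_mul_eq_of_blocks_eq {α : Type*} {χ : ℕ → α} {ℓ r m m' x : ℕ}
    (hblock : ∀ i, 1 ≤ i → i ≤ r → χ (ℓ + m * r + i) = χ (ℓ + m' * r + i))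
    (hlow : ℓ < x) (hhigh : x ≤ ℓ + r) : χ (x + m * r) = χ (x + m' * r) := by
  have hshift : ∀ n, ℓ + n + (x - ℓ) = x + n := fun n => by omega
  simpa only [hshift] using hblock (x - ℓ) (by omega) (by omega)

theorem add_le_of_add_pred_mul_le {a k r n : ℕ} (h : a + (k - 1) * r ≤ n + k * r) :
    a ≤ n + r := by
  have hk : k * r ≤ (k - 1) * r + r := by
    rw [Nat.sub_one_mul]
    exact le_tsub_add
  omega

theorem prismatic_pair_blocks_distinct_general {c : ℕ} (χ : ℕ → Fin c)
    (k r ℓ a : ℕ)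
    (hlow : ℓ + 1 ≤ a) (hhigh : a + 1 + (k - 1) * r ≤ ℓ + k * r)
    (hα : ∀ i j, i < j → j < k → Odd (a + j * r) → χ (a + i * r) ≠ χ (a + j * r))
    (hβ : ∀ i j, i < j → j < k →
      Odd (a + 1 + j * r) → χ (a + 1 + i * r) ≠ χ (a + 1 + j * r)) :
    ∀ m m', m < m' → m' < k →
      ¬ (∀ i, 1 ≤ i → i ≤ r → χ (ℓ + m * r + i) = χ (ℓ + m' * r + i)) := by
  intro m m' hmm' hm'k hblock
  have hstart : a + 1 ≤ ℓ + r := add_le_of_add_pred_mul_le hhigh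
  rcases Nat.even_or_odd (a + m' * r) with heven | hodd
  · have hodd' : Odd (a + 1 + m' * r) := by
      rw [add_right_comm]
      exact heven.add_one
    exact hβ m m' hmm' hm'k hodd' (apply_add_mul_eq_of_blocks_eq hblock (by omega) hstart)
  · exact hα m m' hmm' hm'k hodd (apply_add_mul_eq_of_blocks_eq hblock (by omega) (by omega))

/-- If the interval `[ℓ+1, ℓ+kr]` (`r ≥ 2`) contains a prismatic pair of `k`-term
arithmetic progressions of difference `r` (progressions `a, a+r, ...` and
`a+1, a+1+r, ...`), then no two of the `k` consecutive length-`r` subintervals of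
the interval carry identical color blocks. -/
theorem prismatic_pair_blocks_distinct {c : ℕ} (χ : ℕ → Fin c)
    (k r ℓ a : ℕ) (hk : 2 ≤ k) (hr : 2 ≤ r)
    (hlow : ℓ + 1 ≤ a) (hhigh : a + 1 + (k - 1) * r ≤ ℓ + k * r)
    (hα : ∀ i j, i < j → j < k → Odd (a + j * r) → χ (a + i * r) ≠ χ (a + j * r))
    (hβ : ∀ i j, i < j → j < k →
      Odd (a + 1 + j * r) → χ (a + 1 + i * r) ≠ χ (a + 1 + j * r)) :
    ∀ m m', m < m' → m' < k →
      ¬ (∀ i, 1 ≤ i → i ≤ r → χ (ℓ + m * r + i) = χ (ℓ + m' * r + i)) :=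
  prismatic_pair_blocks_distinct_general χ k r ℓ a hlow hhigh hα hβ
end

section
/- In the 3-ary sequence game where Player 2 always responds to Player 1's move a ∈ ℤ/3 with a+1 (mod 3), every play of the game contains, within the first 16 symbols, two adjacent identical blocks of length ≥ 2. Equivalently: for every sequence s : ℕ → ℤ/3 satisfying s(2k+1) = s(2k) + 1 (mod 3) for all k, there exist an index j and a length n ≥ 2 with j + 2n ≤ 16 such that s(j+i) = s(j+n+i) for all 0 ≤ i < n. -/
/-!
Write `aₖ = s (2k)` for Player 1's moves. A square of length `m` at `k` in `a` gives one of length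
`2m` at `2k` in `s`, and two consecutive descents `aₖ = aₖ₊₁ + 1`, `aₖ₊₁ = aₖ₊₂ + 1` give a
square of length 3 at `2k`. If `a₀ … a₇` avoid squares of lengths 1 and 2 and double descents,
then every inner step `aₖ₊₁ - aₖ` with `1 ≤ k ≤ 5` equals `+1`, so `a₁a₂a₃ = a₄a₅a₆`: a square of
length 3 in `a`, hence one of length 6 at position 2 in `s`.
-/

theorem ZMod.eq_add_one_of_avoids_squares_and_descents (x₀ x₁ x₂ x₃ : ZMod 3)
    (h₀₁ : x₀ ≠ x₁) (h₁₂ : x₁ ≠ x₂) (h₂₃ : x₂ ≠ x₃)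
    (h₀₁₂ : ¬(x₀ = x₁ + 1 ∧ x₁ = x₂ + 1)) (h₁₂₃ : ¬(x₁ = x₂ + 1 ∧ x₂ = x₃ + 1))
    (hsq : ¬(x₀ = x₂ ∧ x₁ = x₃)) : x₂ = x₁ + 1 := by
  revert x₀ x₁ x₂ x₃
  decide

theorem ZMod.three_add_one_add_one_add_one (x : ZMod 3) : x + 1 + 1 + 1 = x := by
  revert x
  decide

def IsSquareAt {α : Type*} (s : ℕ → α) (j n : ℕ) : Prop :=
  ∀ i < n, s (j + i) = s (j + n + i)

namespace IsSquareAt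

variable {α : Type*} {s : ℕ → α} {j n : ℕ}

theorem of_eq_succ (h : s j = s (j + 1)) : IsSquareAt s j 1 := by
  intro i hi
  obtain rfl : i = 0 := by omega
  exact h

theorem of_eq_add_two (h₀ : s j = s (j + 2)) (h₁ : s (j + 1) = s (j + 3)) :
    IsSquareAt s j 2 := by
  intro i hi
  interval_cases i
  exacts [h₀, h₁]

theorem two_mul_of_evens {f : α → α} (hs : ∀ k, s (2 * k + 1) = f (s (2 * k)))
    (h : IsSquareAt (fun k => s (2 * k)) j n) : IsSquareAt s (2 * j) (2 * n) := by
  intro i hi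
  obtain ⟨q, rfl | rfl⟩ := Nat.even_or_odd' i
  · rw [← mul_add, ← mul_add, ← mul_add]
    exact h q (by omega)
  · rw [show 2 * j + (2 * q + 1) = 2 * (j + q) + 1 by ring,
      show 2 * j + 2 * n + (2 * q + 1) = 2 * (j + n + q) + 1 by ring, hs, hs]
    exact congrArg f (h q (by omega))

theorem three_of_add_one {s : ℕ → ZMod 3} (hs : ∀ k, s (2 * k + 1) = s (2 * k) + 1)
    {k : ℕ} (h₀ : s (2 * k) = s (2 * k + 2) + 1) (h₁ : s (2 * k + 2) = s (2 * k + 4) + 1) :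
    IsSquareAt s (2 * k) 3 := by
  have h₃ : s (2 * k + 3) = s (2 * k + 2) + 1 := hs (k + 1)
  have h₅ : s (2 * k + 5) = s (2 * k + 4) + 1 := hs (k + 2)
  intro i hi
  interval_cases i
  · exact h₀.trans h₃.symm
  · show s (2 * k + 1) = s (2 * k + 4)
    rw [hs, h₀, h₁, ZMod.three_add_one_add_one_add_one]
  · exact h₁.trans h₅.symm

end IsSquareAt

theorem isSquareAt_one_three_of_avoids {a : ℕ → ZMod 3} (h₁ : ∀ k ≤ 6, ¬IsSquareAt a k 1)
    (h₂ : ∀ k ≤ 4, ¬IsSquareAt a k 2)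
    (h₃ : ∀ k ≤ 5, ¬(a k = a (k + 1) + 1 ∧ a (k + 1) = a (k + 2) + 1)) :
    IsSquareAt a 1 3 := by
  have step : ∀ k ≤ 4, a (k + 2) = a (k + 1) + 1 := fun k hk =>
    ZMod.eq_add_one_of_avoids_squares_and_descents _ _ _ _ (mt .of_eq_succ (h₁ k (by omega)))
      (mt .of_eq_succ (h₁ (k + 1) (by omega))) (mt .of_eq_succ (h₁ (k + 2) (by omega)))
      (h₃ k (by omega)) (h₃ (k + 1) (by omega)) fun ⟨e₀, e₁⟩ => h₂ k hk (.of_eq_add_two e₀ e₁)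
  intro i hi
  have e₂ : a (i + 4) = a (i + 3) + 1 := step (i + 2) (by omega)
  have e₁ : a (i + 3) = a (i + 2) + 1 := step (i + 1) (by omega)
  rw [show 1 + 3 + i = i + 4 by omega, add_comm, e₂, e₁, step i (by omega),
    ZMod.three_add_one_add_one_add_one]

/-- In the ternary sequence game, if Player 2 always answers Player 1's move `a` with
`a + 1 (mod 3)`, then within the first 16 symbols there are two adjacent identical
blocks of length at least 2. -/
theorem player_two_plus_one_strategy_wins (s : ℕ → ZMod 3)
    (h : ∀ k, s (2 * k + 1) = s (2 * k) + 1) :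
    ∃ j n : ℕ, 2 ≤ n ∧ j + 2 * n ≤ 16 ∧ ∀ i < n, s (j + i) = s (j + n + i) := by
  set a : ℕ → ZMod 3 := fun k => s (2 * k)
  have double {j n : ℕ} (hsq : IsSquareAt a j n) : IsSquareAt s (2 * j) (2 * n) :=
    hsq.two_mul_of_evens (f := (· + 1)) h
  by_cases h₁ : ∃ k ≤ 6, IsSquareAt a k 1
  · obtain ⟨k, hk, hsq⟩ := h₁
    exact ⟨2 * k, 2, le_rfl, by omega, double hsq⟩
  by_cases h₂ : ∃ k ≤ 4, IsSquareAt a k 2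
  · obtain ⟨k, hk, hsq⟩ := h₂
    exact ⟨2 * k, 4, by norm_num, by omega, double hsq⟩
  by_cases h₃ : ∃ k ≤ 5, a k = a (k + 1) + 1 ∧ a (k + 1) = a (k + 2) + 1
  · obtain ⟨k, hk, e₀, e₁⟩ := h₃
    exact ⟨2 * k, 3, by norm_num, by omega, IsSquareAt.three_of_add_one h e₀ e₁⟩
  push Not at h₁ h₂ h₃
  exact ⟨2, 6, by norm_num, by norm_num,
    double (isSquareAt_one_three_of_avoids h₁ h₂ fun k hk => not_and.2 (h₃ k hk))⟩
end

section
/- Weight product bound for the pattern-avoidance game: let 0 < b ≤ 1/2, φ(b) = ∏_{j≥1}(1−b^j), and C = 8(1−b)⁶/(b·φ(b)^{24}). Then for every integer c ≥ C and every integer n₀ ≥ 4: 2^{⌊n₀/2⌋}/c^{⌊⌈n₀/2⌉/2⌋} ≤ b^{⌊⌈n₀/2⌉/2⌋} · ∏_{n=4}^∞ (1 − b^{⌊⌈n/2⌉/2⌋})^{n₀}. -/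
/-!
Since `⌊⌈n/2⌉/2⌋ = ⌊(n+1)/4⌋`, the exponents `⌊(k+5)/4⌋`, `k ≥ 0`, run through each `j ≥ 1` four
times except `j = 1`, which occurs three times. Hence the product `P` on the right satisfies
`(1 - b) P = φ(b)⁴`, so `C = 8 / (b P⁶)`, and `0 < P ≤ 1`. The bound then follows from
`2^⌊n₀/2⌋ ≤ 8^m` and `n₀ ≤ 6m` for `m = ⌊⌈n₀/2⌉/2⌋`.
-/

open Finset Real

@[to_additive HasSum.comp_nat_div]
theorem HasProd.comp_nat_div {M : Type*} [CommMonoid M] [TopologicalSpace M] [ContinuousMul M]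
    {f : ℕ → M} {a : M} (hf : HasProd f a) {N : ℕ} (hN : 0 < N) :
    HasProd (fun k ↦ f (k / N)) (a ^ N) := by
  have hclass : ∀ r < N, HasProd (fun k ↦ if k % N = r then f (k / N) else 1) a := by
    intro r hr
    have hinj : Function.Injective (fun q ↦ N * q + r) :=
      (add_left_injective r).comp (mul_right_injective₀ hN.ne')
    refine (hinj.hasProd_iff fun k hk ↦ if_neg fun hkr ↦ hk ⟨k / N, ?_⟩).mp
      (hf.congr_fun fun q ↦ ?_)
    · simp only [← hkr, Nat.div_add_mod]
    · simp [Nat.mod_eq_of_lt hr, Nat.mul_add_div hN, Nat.div_eq_of_lt hr]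
  simpa [prod_ite_eq, Nat.mod_lt _ hN] using hasProd_prod fun r hr ↦ hclass r (mem_range.mp hr)

theorem Summable.comp_succ_div {G : Type*} [AddCommGroup G] [TopologicalSpace G]
    [IsTopologicalAddGroup G] {u : ℕ → G} (hu : Summable u) {N : ℕ} (hN : 0 < N) :
    Summable fun k ↦ u ((k + 1) / N) :=
  (summable_nat_add_iff 1).2 (hu.hasSum.comp_nat_div hN).summable

theorem Real.multipliable_one_sub_of_summable {ι : Type*} {u : ι → ℝ} (hu : Summable u) :
    Multipliable fun i ↦ 1 - u i := by
  simpa [sub_eq_add_neg] using Real.multipliable_one_add_of_summable hu.neg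

theorem Real.tprod_one_sub_mem_Ioc {ι : Type*} {u : ι → ℝ} (hu : Summable u)
    (hu0 : ∀ i, 0 ≤ u i) (hu1 : ∀ i, u i < 1) : ∏' i, (1 - u i) ∈ Set.Ioc 0 1 := by
  have hlog : Summable fun i ↦ log (1 - u i) := by
    simpa [sub_eq_add_neg] using Real.summable_log_one_add_of_summable hu.neg
  rw [← Real.rexp_tsum_eq_tprod (fun i ↦ sub_pos.2 (hu1 i)) hlog]
  refine ⟨exp_pos _, exp_le_one_iff.2 (tsum_nonpos fun i ↦ log_nonpos ?_ ?_)⟩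
  · linarith [hu1 i]
  · linarith [hu0 i]

theorem one_sub_mul_tprod_one_sub_comp_succ_div {u : ℕ → ℝ} (hu : Summable u) {N : ℕ}
    (hN : 0 < N) : (1 - u 0) * ∏' k, (1 - u ((k + 1) / N)) = (∏' j, (1 - u j)) ^ N := by
  have hfull := (Real.multipliable_one_sub_of_summable hu).hasProd.comp_nat_div hN
  have hshift := (Real.multipliable_one_sub_of_summable (hu.comp_succ_div hN)).hasProd.zero_mul
    (f := fun k ↦ 1 - u (k / N))
  simpa using hshift.unique hfull

theorem two_pow_half_div_le {b P c : ℝ} (hb : 0 < b) (hP0 : 0 < P) (hP1 : P ≤ 1)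
    (hc : 8 / (b * P ^ 6) ≤ c) {n m : ℕ} (hnm : n ≤ 6 * m) :
    2 ^ (n / 2) / c ^ m ≤ b ^ m * P ^ n := by
  have h8 : (2 : ℝ) ^ (n / 2) ≤ 8 ^ m := by
    rw [show (8 : ℝ) = 2 ^ 3 by norm_num, ← pow_mul]
    exact pow_le_pow_right₀ (by norm_num) (by omega)
  calc (2 : ℝ) ^ (n / 2) / c ^ m ≤ 8 ^ m / (8 / (b * P ^ 6)) ^ m := by gcongr
    _ = b ^ m * P ^ (6 * m) := by
        rw [div_pow, mul_pow, pow_mul]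
        field_simp
    _ ≤ b ^ m * P ^ n :=
        mul_le_mul_of_nonneg_left (pow_le_pow_of_le_one hP0.le hP1 hnm) (by positivity)

/-- Weight product bound for the pattern-avoidance game: with `0 < b ≤ 1/2`,
`φ(b) = ∏_{j≥1}(1-b^j)` and `C = 8(1-b)⁶/(b·φ(b)²⁴)`, for every integer `c ≥ C` and
every `n₀ ≥ 4` one has
`2^⌊n₀/2⌋ / c^⌊⌈n₀/2⌉/2⌋ ≤ b^⌊⌈n₀/2⌉/2⌋ · ∏_{n=4}^∞ (1 - b^⌊⌈n/2⌉/2⌋)^{n₀}`.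
(Here `⌈n/2⌉ = (n+1)/2` and all divisions are natural-number divisions.) -/
theorem pattern_game_weight_bound (b : ℝ) (hb0 : 0 < b) (hb : b ≤ 1 / 2)
    (c : ℕ)
    (hc : 8 * (1 - b) ^ 6 / (b * (∏' j : ℕ, (1 - b ^ (j + 1))) ^ 24) ≤ (c : ℝ))
    (n₀ : ℕ) (hn₀ : 4 ≤ n₀) :
    (2 : ℝ) ^ (n₀ / 2) / (c : ℝ) ^ ((n₀ + 1) / 2 / 2)
      ≤ b ^ ((n₀ + 1) / 2 / 2) * ∏' k : ℕ, (1 - b ^ ((k + 4 + 1) / 2 / 2)) ^ n₀ := by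
  have hb1 : b < 1 := by linarith
  have hgeom : Summable fun j : ℕ ↦ b ^ (j + 1) :=
    (summable_nat_add_iff 1).2 (summable_geometric_of_lt_one hb0.le hb1)
  have hexp : ∀ k, (k + 4 + 1) / 2 / 2 = (k + 1) / 4 + 1 := by omega
  simp_rw [hexp]
  set φ := ∏' j : ℕ, (1 - b ^ (j + 1))
  set P := ∏' k : ℕ, (1 - b ^ ((k + 1) / 4 + 1))
  have hφ : (1 - b) * P = φ ^ 4 := by
    simpa using one_sub_mul_tprod_one_sub_comp_succ_div hgeom (N := 4) (by norm_num)
  obtain ⟨hP0, hP1⟩ : P ∈ Set.Ioc 0 1 :=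
    Real.tprod_one_sub_mem_Ioc (hgeom.comp_succ_div (by norm_num)) (fun k ↦ by positivity)
      fun k ↦ pow_lt_one₀ hb0.le hb1 (by omega)
  have hC : 8 * (1 - b) ^ 6 / (b * φ ^ 24) = 8 / (b * P ^ 6) := by
    have : 1 - b ≠ 0 := by linarith
    rw [show φ ^ 24 = (φ ^ 4) ^ 6 by ring, ← hφ]
    field_simp
  rw [(Real.multipliable_one_sub_of_summable (hgeom.comp_succ_div (by norm_num))).tprod_pow]
  exact two_pow_half_div_le hb0 hP0 hP1 (hC ▸ hc) (by omega)
end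

section
/- If Player 1 has a strategy in the (1:t) biased binary sequence game guaranteeing that identical blocks of any length n > N are at distance greater than (2+ε)^{n/(t+1)}, then a contradiction follows: specifically, if S is the play against Player 2's all-zeros strategy and S' is the subsequence of Player 1's moves, then for sufficiently large n' the sequence S' would contain no two identical blocks of length n' within distance 2^{n'}, contradicting the pigeonhole principle applied to the first 2^{n'}+n' terms of S'. -/
/-!
Let Player 2 play only zeros. By pigeonhole, among the first `2^n + 1` starting positions of
Player 1's subsequence `S'` two carry the same block of length `n`, at distance `d ≤ 2^n`.
Since all other positions of `S` are `0`, this lifts to two identical blocks of length `(t+1)n`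
in `S` at distance `(t+1)d ≤ (t+1)2^n`, which is smaller than `(2+ε)^n` once `n` is large.
-/

open Filter

theorem Nat.one_add_mod_ne_one {r d : ℕ} (hr₀ : 0 < r) (hrd : r < d) : (1 + r) % d ≠ 1 := by
  rcases (Nat.succ_le_of_lt hrd).lt_or_eq with hlt | heq
  · rw [Nat.mod_eq_of_lt (by omega)]; omega
  · rw [Nat.add_comm, ← Nat.succ_eq_add_one, heq, Nat.mod_self]; omega

theorem exists_lt_le_card_pow_block_eq {β : Type*} [Fintype β] (s : ℕ → β) (n : ℕ) :
    ∃ a b, a < b ∧ b ≤ Fintype.card β ^ n ∧ ∀ i < n, s (a + i) = s (b + i) := by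
  have hcard : (Finset.univ : Finset (Fin n → β)).card <
      (Finset.range (Fintype.card β ^ n + 1)).card := by
    rw [Finset.card_univ, Fintype.card_fun, Fintype.card_fin, Finset.card_range]
    exact Nat.lt_succ_self _
  obtain ⟨a, ha, b, hb, hne, hab⟩ := Finset.exists_ne_map_eq_of_card_lt_of_maps_to hcard
    (f := fun k (i : Fin n) => s (k + i)) (fun _ _ => Finset.mem_coe.2 (Finset.mem_univ _))
  rw [Finset.mem_range] at ha hb
  rcases hne.lt_or_gt with h | h
  · exact ⟨a, b, h, by omega, fun i hi => congrFun hab ⟨i, hi⟩⟩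
  · exact ⟨b, a, h, by omega, fun i hi => (congrFun hab ⟨i, hi⟩).symm⟩

theorem block_eq_of_block_eq_on_residue_one {β : Type*} [Zero β] {S : ℕ → β} {t : ℕ}
    (hS : ∀ m, m % (t + 1) ≠ 1 → S m = 0) {a b n : ℕ}
    (h : ∀ i < n, S ((t + 1) * (a + i) + 1) = S ((t + 1) * (b + i) + 1)) :
    ∀ j < (t + 1) * n, S ((t + 1) * a + 1 + j) = S ((t + 1) * b + 1 + j) := by
  intro j hj
  obtain ⟨q, r, hr, rfl⟩ : ∃ q r, r < t + 1 ∧ j = (t + 1) * q + r :=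
    ⟨j / (t + 1), j % (t + 1), Nat.mod_lt _ t.succ_pos, (Nat.div_add_mod j (t + 1)).symm⟩
  have hpos (c : ℕ) : (t + 1) * c + 1 + ((t + 1) * q + r) = (t + 1) * (c + q) + (1 + r) := by ring
  rcases Nat.eq_zero_or_pos r with rfl | hr₀
  · have hq : q < n := by
      by_contra! hq
      have := Nat.mul_le_mul_left (t + 1) hq
      omega
    simpa only [hpos] using h q hq
  · have hzero (c : ℕ) : S ((t + 1) * (c + q) + (1 + r)) = 0 :=
      hS _ (by rw [Nat.mul_add_mod]; exact Nat.one_add_mod_ne_one hr₀ hr)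
    rw [hpos, hpos, hzero, hzero]

theorem eventually_mul_pow_lt_pow {x y : ℝ} (c : ℝ) (hy : 0 < y) (hxy : y < x) :
    ∀ᶠ n : ℕ in atTop, c * y ^ n < x ^ n := by
  filter_upwards [(tendsto_pow_atTop_atTop_of_one_lt ((one_lt_div hy).2 hxy)).eventually_gt_atTop c]
    with n hn
  calc c * y ^ n < (x / y) ^ n * y ^ n := by gcongr
    _ = x ^ n := by rw [div_pow, div_mul_cancel₀ _ (pow_ne_zero _ hy.ne')]

theorem beck_game_best_possible_general (t : ℕ) (ε : ℝ) (hε : 0 < ε) (N : ℕ) :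
    ¬ ∃ S : ℕ → Fin 2,
      (∀ m : ℕ, m % (t + 1) ≠ 1 → S m = 0) ∧
      (∀ k ℓ n : ℕ, N < n → k < ℓ → (∀ i < n, S (k + i) = S (ℓ + i)) →
        ((2 : ℝ) + ε) ^ ((n : ℝ) / ((t : ℝ) + 1)) < ((ℓ - k : ℕ) : ℝ)) := by
  rintro ⟨S, hS, hgap⟩
  obtain ⟨n, hgrowth, hNn⟩ := ((eventually_mul_pow_lt_pow ((t : ℝ) + 1) two_pos
    (by linarith : (2 : ℝ) < 2 + ε)).and (eventually_gt_atTop N)).exists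
  obtain ⟨a, b, hab, hb, hblock⟩ :=
    exists_lt_le_card_pow_block_eq (fun k => S ((t + 1) * k + 1)) n
  rw [Fintype.card_fin] at hb
  have hgap' := hgap ((t + 1) * a + 1) ((t + 1) * b + 1) ((t + 1) * n)
    (hNn.trans_le (Nat.le_mul_of_pos_left n t.succ_pos))
    (by have := Nat.mul_lt_mul_of_pos_left hab (by omega : 0 < t + 1); omega)
    (block_eq_of_block_eq_on_residue_one hS hblock)
  have hdist : (((t + 1) * b + 1 - ((t + 1) * a + 1) : ℕ) : ℝ) ≤ ((t : ℝ) + 1) * 2 ^ n := by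
    have := Nat.mul_le_mul_left (t + 1) hb
    exact_mod_cast (by omega : (t + 1) * b + 1 - ((t + 1) * a + 1) ≤ (t + 1) * 2 ^ n)
  have hexp : (((t + 1) * n : ℕ) : ℝ) / ((t : ℝ) + 1) = n := by
    push_cast
    field_simp
  rw [hexp, Real.rpow_natCast] at hgap'
  linarith

/-- Theorem 1.3 is essentially best possible: there is no play of the `(1:t)` biased
binary sequence game in which Player 2 plays all zeros (positions `≢ 1 (mod t+1)` are
`0`) and every pair of identical blocks of any length `n > N` lies at distance greater
than `(2+ε)^{n/(t+1)}`; otherwise the subsequence of Player 1's moves would contain no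
two identical blocks of some large length `n'` within distance `2^{n'}`, contradicting
the pigeonhole principle. -/
theorem beck_game_best_possible (t : ℕ) (ht : 1 ≤ t) (ε : ℝ) (hε : 0 < ε) (N : ℕ) :
    ¬ ∃ S : ℕ → Fin 2,
      (∀ m : ℕ, m % (t + 1) ≠ 1 → S m = 0) ∧
      (∀ k ℓ n : ℕ, N < n → k < ℓ → (∀ i < n, S (k + i) = S (ℓ + i)) →
        ((2 : ℝ) + ε) ^ ((n : ℝ) / ((t : ℝ) + 1)) < ((ℓ - k : ℕ) : ℝ)) :=
  beck_game_best_possible_general t ε hε N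
end
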